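/- arXiv:2107.14431 — 6 statements merged into one kernel-verified Lean document; each statement's English description precedes it below -/
import Mathlib

section
/- Let r > 0, x ∈ ℝ^d, and let Σ be a nonempty compact subset of the sphere ∂B(x,r). Then for every s in the convex hull of Σ, the open ball of center s and radius |s − x| is contained in the set {y ∈ ℝ^d : d(y, Σ) < r}. -/
/-!
Expanding the squares, `dist z y ^ 2 - dist z x ^ 2` is an affine function of `z`, so the points
strictly closer to `y` than to `x` form an open half-space. A point `y` of the ball `B(s, |s - x|)`
is such that `s` lies in this half-space; since `s` is a convex combination of points of `Σ`, some
`a ∈ Σ` lies in it as well, i.e. `|y - a| < |a - x| = r`.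
-/

open Set RealInnerProductSpace

section

variable {E : Type*} [NormedAddCommGroup E] [InnerProductSpace ℝ E]

lemma dist_sq_sub_dist_sq_eq_inner (x y z : E) :
    dist z y ^ 2 - dist z x ^ 2 = ⟪2 • (x - y), z⟫ + (‖y‖ ^ 2 - ‖x‖ ^ 2) := by
  rw [dist_eq_norm, dist_eq_norm, norm_sub_sq_real, norm_sub_sq_real, two_smul, inner_add_left,
    inner_sub_left, real_inner_comm y, real_inner_comm x]
  ring

lemma concaveOn_dist_sq_sub_dist_sq (x y : E) :
    ConcaveOn ℝ univ fun z ↦ dist z y ^ 2 - dist z x ^ 2 := by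
  simp only [dist_sq_sub_dist_sq_eq_inner x y]
  exact ((innerₛₗ ℝ (2 • (x - y))).concaveOn convex_univ).add_const _

lemma exists_dist_lt_dist_of_mem_convexHull {S : Set E} {x y s : E} (hs : s ∈ convexHull ℝ S)
    (hsy : dist s y < dist s x) : ∃ a ∈ S, dist a y < dist a x := by
  obtain ⟨a, haS, hle⟩ :=
    (concaveOn_dist_sq_sub_dist_sq x y).exists_le_of_mem_convexHull (subset_univ S) hs
  refine ⟨a, haS, lt_of_pow_lt_pow_left₀ 2 dist_nonneg ?_⟩
  have := pow_lt_pow_left₀ hsy dist_nonneg two_ne_zero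
  linarith

end

theorem ball_subset_sublevel_of_convexHull_sphere_general {d : ℕ}
    (r : ℝ) (x : EuclideanSpace ℝ (Fin d))
    (S : Set (EuclideanSpace ℝ (Fin d)))
    (hsub : S ⊆ Metric.sphere x r) :
    ∀ s ∈ convexHull ℝ S,
      Metric.ball s (dist s x) ⊆ {y | Metric.infDist y S < r} := by
  intro s hs y hy
  rw [Metric.mem_ball, dist_comm] at hy
  obtain ⟨a, haS, hay⟩ := exists_dist_lt_dist_of_mem_convexHull hs hy
  calc Metric.infDist y S ≤ dist y a := Metric.infDist_le_dist_of_mem haS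
    _ = dist a y := dist_comm y a
    _ < dist a x := hay
    _ = r := hsub haS

theorem ball_subset_sublevel_of_convexHull_sphere {d : ℕ}
    (r : ℝ) (hr : 0 < r) (x : EuclideanSpace ℝ (Fin d))
    (S : Set (EuclideanSpace ℝ (Fin d))) (hne : S.Nonempty) (hcomp : IsCompact S)
    (hsub : S ⊆ Metric.sphere x r) :
    ∀ s ∈ convexHull ℝ S,
      Metric.ball s (dist s x) ⊆ {y | Metric.infDist y S < r} :=
  ball_subset_sublevel_of_convexHull_sphere_general r x S hsub
end

section
/- Let K ⊂ ℝ^d be nonempty compact and define J_K(x) := dist(x, conv Σ_K(x)) for x ∉ K, where Σ_K(x) is the set of nearest points of K to x. Then J_K is lower semicontinuous on ℝ^d \ K: liminf_{y→x} J_K(y) ≥ J_K(x). -/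
/-- The set of nearest points of `K` to `x`. -/
def nearestPoints {d : ℕ} (K : Set (EuclideanSpace ℝ (Fin d)))
    (x : EuclideanSpace ℝ (Fin d)) : Set (EuclideanSpace ℝ (Fin d)) :=
  {a ∈ K | dist x a = Metric.infDist x K}

/-- `J_K(x) = dist(x, conv Σ_K(x))`. -/
noncomputable def JK {d : ℕ} (K : Set (EuclideanSpace ℝ (Fin d)))
    (x : EuclideanSpace ℝ (Fin d)) : ℝ :=
  Metric.infDist x (convexHull ℝ (nearestPoints K x))

lemma nearestPoints_nonempty {d : ℕ} {K : Set (EuclideanSpace ℝ (Fin d))}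
    (hne : K.Nonempty) (hK : IsCompact K) (x : EuclideanSpace ℝ (Fin d)) :
    (nearestPoints K x).Nonempty := by
  obtain ⟨a, haK, ha⟩ := hK.exists_infDist_eq_dist hne x
  exact ⟨a, haK, ha.symm⟩

/-- Upper semicontinuity of the nearest-point set map. -/
lemma nearestPoints_usc {d : ℕ} {K : Set (EuclideanSpace ℝ (Fin d))}
    (hK : IsCompact K) (x : EuclideanSpace ℝ (Fin d)) {ε : ℝ} (hε : 0 < ε) :
    ∃ δ > 0, ∀ y, dist y x < δ →
      nearestPoints K y ⊆ Metric.thickening ε (nearestPoints K x) := by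
  set U := Metric.thickening ε (nearestPoints K x) with hU
  by_cases hC : (K \ U).Nonempty
  · have hCc : IsCompact (K \ U) := hK.diff Metric.isOpen_thickening
    obtain ⟨a, haC, ha⟩ := hCc.exists_infDist_eq_dist hC x
    set m := Metric.infDist x (K \ U) with hm
    have hlt : Metric.infDist x K < m := by
      rcases lt_or_eq_of_le (Metric.infDist_le_infDist_of_subset Set.diff_subset hC (x := x))
        with h | h
      · exact h
      · exfalso
        have : a ∈ nearestPoints K x := ⟨haC.1, by rw [← ha, h]⟩
        exact haC.2 (Metric.self_subset_thickening hε _ this)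
    refine ⟨(m - Metric.infDist x K) / 2, by linarith, fun y hy a' ha' => ?_⟩
    by_contra hcon
    have ha'C : a' ∈ K \ U := ⟨ha'.1, hcon⟩
    have h1 : m ≤ dist x a' := Metric.infDist_le_dist_of_mem ha'C
    have h2 : dist y a' = Metric.infDist y K := ha'.2
    have h3 : Metric.infDist y K ≤ Metric.infDist x K + dist y x :=
      Metric.infDist_le_infDist_add_dist
    have h4 : dist x a' ≤ dist x y + dist y a' := dist_triangle _ _ _
    rw [dist_comm x y] at h4
    linarith
  · refine ⟨1, one_pos, fun y _ a' ha' => ?_⟩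
    have : a' ∈ K := ha'.1
    have : a' ∈ U := by
      by_contra h
      exact hC ⟨a', ha'.1, h⟩
    exact this

lemma infDist_thickening_ge {α : Type*} [PseudoMetricSpace α] {A : Set α}
    (hA : A.Nonempty) {ε : ℝ} (hε : 0 < ε) (y : α) :
    Metric.infDist y A - ε ≤ Metric.infDist y (Metric.thickening ε A) := by
  have hT : (Metric.thickening ε A).Nonempty := ⟨hA.choose,
    Metric.self_subset_thickening hε _ hA.choose_spec⟩
  by_contra hcon
  push_neg at hcon
  obtain ⟨z, hzT, hz⟩ := (Metric.infDist_lt_iff hT).mp hcon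
  obtain ⟨a, haA, haz⟩ := Metric.mem_thickening_iff.mp hzT
  have : Metric.infDist y A ≤ dist y z + dist z a :=
    le_trans (Metric.infDist_le_dist_of_mem haA) (dist_triangle _ _ _)
  linarith

theorem JK_lowerSemicontinuousOn {d : ℕ}
    (K : Set (EuclideanSpace ℝ (Fin d))) (hne : K.Nonempty) (hK : IsCompact K) :
    LowerSemicontinuousOn (JK K) Kᶜ := by
  intro x _ c hc
  set ε := (JK K x - c) / 3 with hεdef
  have hε : 0 < ε := by simp only [hεdef]; linarith
  obtain ⟨δ, hδ, hsub⟩ := nearestPoints_usc hK x hε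
  have hball : Metric.ball x (min δ ε) ∈ nhdsWithin x Kᶜ :=
    mem_nhdsWithin_of_mem_nhds (Metric.ball_mem_nhds x (lt_min hδ hε))
  filter_upwards [hball] with y hy
  have hyδ : dist y x < δ := lt_of_lt_of_le (Metric.mem_ball.mp hy) (min_le_left _ _)
  have hyε : dist y x < ε := lt_of_lt_of_le (Metric.mem_ball.mp hy) (min_le_right _ _)
  -- convex hull inclusion
  have hhull : convexHull ℝ (nearestPoints K y) ⊆
      Metric.thickening ε (convexHull ℝ (nearestPoints K x)) := by
    apply convexHull_min
    · exact (hsub y hyδ).trans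
        (Metric.thickening_subset_of_subset ε (subset_convexHull ℝ _))
    · exact (convex_convexHull ℝ _).thickening ε
  have hneX : (convexHull ℝ (nearestPoints K x)).Nonempty :=
    (nearestPoints_nonempty hne hK x).mono (subset_convexHull ℝ _) |>.elim
      (fun z hz => ⟨z, hz⟩)
  have hneY : (convexHull ℝ (nearestPoints K y)).Nonempty :=
    ((nearestPoints_nonempty hne hK y).mono (subset_convexHull ℝ _)).elim
      (fun z hz => ⟨z, hz⟩)
  have h1 : Metric.infDist y (Metric.thickening ε (convexHull ℝ (nearestPoints K x))) ≤ JK K y :=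
    Metric.infDist_le_infDist_of_subset hhull hneY
  have h2 : Metric.infDist y (convexHull ℝ (nearestPoints K x)) - ε ≤
      Metric.infDist y (Metric.thickening ε (convexHull ℝ (nearestPoints K x))) :=
    infDist_thickening_ge hneX hε y
  have h3 : Metric.infDist x (convexHull ℝ (nearestPoints K x)) ≤
      Metric.infDist y (convexHull ℝ (nearestPoints K x)) + dist x y :=
    Metric.infDist_le_infDist_add_dist
  rw [dist_comm x y] at h3
  have hfin : JK K x - dist y x - ε ≤ JK K y := by
    have e1 : JK K y = Metric.infDist y (convexHull ℝ (nearestPoints K y)) := rfl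
    have e2 : JK K x = Metric.infDist x (convexHull ℝ (nearestPoints K x)) := rfl
    rw [e1, e2]; linarith
  have : c = JK K x - 3 * ε := by rw [hεdef]; ring
  linarith
end

section
/- Let μ^ω be a random signed measure on ℝ^d over a probability space (Ω, 𝔉, ℙ), i.e., ω ↦ μ^ω(B) is measurable for every bounded Borel set B. Then the map (ω, K) ↦ μ^ω(K) from Ω × 𝒦 to ℝ is jointly measurable, where 𝒦 carries the Borel σ-algebra of the Hausdorff metric. -/
/-!
Fix a compact `K`. Cover `X` by a countable measurable partition into cells `A i`, each inside a
closed ball `closedBall (c i) r`, and let `S_r(K)` be the union of the cells whose ball meets `K`.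
Then `K ⊆ S_r(K) ⊆ cthickening (2 * r) K`, so, as `r → 0`, `μ^ω(S_r(K)) → μ^ω(K)` because the
total variation of `μ^ω` is continuous along closed thickenings of the closed set `K`. For fixed
`r`, `μ^ω(S_r(K)) = ∑ᵢ 1[K ∩ closedBall (c i) r ≠ ∅] μ^ω(A i)` is jointly measurable, since
`{K | K ∩ F ≠ ∅}` is closed in the Hausdorff topology for closed `F`.
-/

open MeasureTheory TopologicalSpace Filter Function Metric Set Topology

theorem measurable_of_hasSum {α β ι : Type*} [MeasurableSpace α] [Countable ι]
    [AddCommMonoid β] [TopologicalSpace β] [PseudoMetrizableSpace β] [MeasurableSpace β]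
    [BorelSpace β] [MeasurableAdd₂ β] {f : ι → α → β} {g : α → β}
    (hf : ∀ i, Measurable (f i)) (hg : ∀ a, HasSum (fun i => f i a) (g a)) : Measurable g :=
  measurable_of_tendsto_metrizable' atTop (fun s => Finset.measurable_sum s fun i _ => hf i)
    (tendsto_pi_nhds.2 hg)

namespace MeasureTheory.SignedMeasure

theorem tendsto_apply_of_subset_cthickening {X ι : Type*} [PseudoMetricSpace X]
    [MeasurableSpace X] [OpensMeasurableSpace X] (s : SignedMeasure X) {F : Set X}
    (hF : IsClosed F) {l : Filter ι} {S : ι → Set X} {r : ι → ℝ}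
    (hS : ∀ i, MeasurableSet (S i)) (hFS : ∀ i, F ⊆ S i)
    (hSr : ∀ i, S i ⊆ cthickening (r i) F) (hr : Tendsto r l (𝓝 0)) :
    Tendsto (fun i => s (S i)) l (𝓝 (s F)) := by
  set ν := s.totalVariation
  have hν : Tendsto (fun i => ν.real (cthickening (r i) F)) l (𝓝 (ν.real F)) :=
    (ENNReal.tendsto_toReal (measure_ne_top ν F)).comp
      ((tendsto_measure_cthickening_of_isClosed ⟨1, one_pos, measure_ne_top ν _⟩ hF).comp hr)
  have hdiff : Tendsto (fun i => s (S i \ F)) l (𝓝 0) := by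
    refine squeeze_zero_norm (fun i => ?_) (sub_self (ν.real F) ▸ hν.sub_const (ν.real F))
    calc ‖s (S i \ F)‖ ≤ ν.real (S i \ F) := s.norm_le_totalVariation _
      _ ≤ ν.real (cthickening (r i) F \ F) := measureReal_mono (sdiff_subset_sdiff_left (hSr i))
      _ = ν.real (cthickening (r i) F) - ν.real F :=
        measureReal_sdiff (self_subset_cthickening F) hF.measurableSet
  simpa only [VectorMeasure.of_add_of_sdiff hF.measurableSet (hS _) (hFS _), add_zero]
    using hdiff.const_add (s F)

end MeasureTheory.SignedMeasure

section OuterApprox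

variable {X ι : Type*} [PseudoMetricSpace X]

/-- Testing the closed ball rather than the cell itself makes the selection of a cell a closed
condition on `K`. -/
def outerApprox (A : ι → Set X) (c : ι → X) (r : ℝ) (K : Set X) : Set X :=
  ⋃ i, ⋃ (_ : (K ∩ closedBall (c i) r).Nonempty), A i

variable {A : ι → Set X} {c : ι → X} {r : ℝ}

theorem subset_outerApprox (hA : ∀ i, A i ⊆ closedBall (c i) r) (hcover : ⋃ i, A i = univ)
    (K : Set X) : K ⊆ outerApprox A c r K := by
  intro x hx
  obtain ⟨i, hi⟩ := mem_iUnion.1 (hcover.symm ▸ mem_univ x)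
  exact mem_iUnion₂.2 ⟨i, ⟨x, hx, hA i hi⟩, hi⟩

theorem outerApprox_subset_cthickening (hA : ∀ i, A i ⊆ closedBall (c i) r) (K : Set X) :
    outerApprox A c r K ⊆ cthickening (2 * r) K := by
  simp only [outerApprox, iUnion_subset_iff]
  rintro i ⟨y, hyK, hy⟩ x hx
  refine mem_cthickening_of_dist_le x y _ K hyK ?_
  calc dist x y ≤ dist x (c i) + dist y (c i) := dist_triangle_right ..
    _ ≤ 2 * r := by linarith [mem_closedBall.1 (hA i hx), mem_closedBall.1 hy]

variable [MeasurableSpace X] [Countable ι]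

theorem measurableSet_outerApprox (hA : ∀ i, MeasurableSet (A i)) (K : Set X) :
    MeasurableSet (outerApprox A c r K) :=
  .iUnion fun i => .iUnion fun _ => hA i

theorem measurable_signedMeasure_apply_outerApprox {Ω : Type*} [MeasurableSpace Ω]
    [MeasurableSpace (NonemptyCompacts X)] [OpensMeasurableSpace (NonemptyCompacts X)]
    (hA : ∀ i, MeasurableSet (A i)) (hd : Pairwise (Disjoint on A)) (μ : Ω → SignedMeasure X)
    (hμ : ∀ i, Measurable fun ω => μ ω (A i)) :
    Measurable fun p : Ω × NonemptyCompacts X => μ p.1 (outerApprox A c r p.2) := by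
  classical
  have hhit (i : ι) : MeasurableSet
      {p : Ω × NonemptyCompacts X | ((p.2 : Set X) ∩ closedBall (c i) r).Nonempty} :=
    measurable_snd
      (NonemptyCompacts.isClosed_inter_nonempty_of_isClosed isClosed_closedBall).measurableSet
  refine measurable_of_hasSum
    (f := fun i p => if ((p.2 : Set X) ∩ closedBall (c i) r).Nonempty then μ p.1 (A i) else 0)
    (fun i => ((hμ i).comp measurable_fst).ite (hhit i) measurable_const) fun p => ?_
  rw [outerApprox]
  convert VectorMeasure.hasSum_of_disjoint_iUnion (v := μ p.1)
    (f := fun i => ⋃ (_ : ((p.2 : Set X) ∩ closedBall (c i) r).Nonempty), A i)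
    (fun i => .iUnion fun _ => hA i) fun i j hij => (hd hij).mono
      (iUnion_subset fun _ => subset_rfl) (iUnion_subset fun _ => subset_rfl) using 2 with i
  by_cases h : ((p.2 : Set X) ∩ closedBall (c i) r).Nonempty <;> simp [h]

end OuterApprox

theorem Metric.exists_measurable_partition_subset_closedBall {X : Type*} [PseudoMetricSpace X]
    [SeparableSpace X] [Nonempty X] [MeasurableSpace X] [OpensMeasurableSpace X] {r : ℝ}
    (hr : 0 < r) : ∃ (A : ℕ → Set X) (c : ℕ → X), (∀ i, MeasurableSet (A i)) ∧
      Pairwise (Disjoint on A) ∧ ⋃ i, A i = univ ∧ ∀ i, A i ⊆ closedBall (c i) r := by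
  refine ⟨disjointed fun i => ball (denseSeq X i) r, denseSeq X,
    .disjointed fun _ => measurableSet_ball, disjoint_disjointed _, ?_,
    fun i => (disjointed_subset _ i).trans ball_subset_closedBall⟩
  simpa only [iUnion_disjointed, biUnion_range] using
    (dense_iff_iUnion_ball _).1 (denseRange_denseSeq X) r hr

theorem measurable_signedMeasure_apply_nonemptyCompacts {X Ω : Type*} [MetricSpace X]
    [SeparableSpace X] [MeasurableSpace X] [OpensMeasurableSpace X]
    [MeasurableSpace (NonemptyCompacts X)] [OpensMeasurableSpace (NonemptyCompacts X)]
    [MeasurableSpace Ω] (μ : Ω → SignedMeasure X)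
    (hμ : ∀ B, MeasurableSet B → Bornology.IsBounded B → Measurable fun ω => μ ω B) :
    Measurable fun p : Ω × NonemptyCompacts X => μ p.1 p.2 := by
  rcases isEmpty_or_nonempty X with hX | hX
  · have : IsEmpty (NonemptyCompacts X) := ⟨fun K => K.nonempty.ne_empty (eq_empty_of_isEmpty _)⟩
    exact measurable_of_empty _
  choose A c hA_meas hA_disj hA_cover hA_ball using fun n : ℕ =>
    exists_measurable_partition_subset_closedBall (X := X) (Nat.one_div_pos_of_nat (n := n))
  have hr : Tendsto (fun n : ℕ => 2 * (1 / ((n : ℝ) + 1))) atTop (𝓝 0) := by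
    simpa using tendsto_one_div_add_atTop_nhds_zero_nat.const_mul (2 : ℝ)
  have hμ_approx (n : ℕ) : Measurable fun p : Ω × NonemptyCompacts X =>
      μ p.1 (outerApprox (A n) (c n) (1 / (n + 1)) p.2) :=
    measurable_signedMeasure_apply_outerApprox (hA_meas n) (hA_disj n) μ fun i =>
      hμ _ (hA_meas n i) (isBounded_closedBall.subset (hA_ball n i))
  refine measurable_of_tendsto_metrizable' atTop hμ_approx (tendsto_pi_nhds.2 fun p => ?_)
  exact (μ p.1).tendsto_apply_of_subset_cthickening p.2.isCompact.isClosed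
    (fun n => measurableSet_outerApprox (hA_meas n) _)
    (fun n => subset_outerApprox (hA_ball n) (hA_cover n) _)
    (fun n => outerApprox_subset_cthickening (hA_ball n) _) hr

theorem random_signed_measure_jointly_measurable {d : ℕ}
    {Ω : Type*} [MeasurableSpace Ω]
    [MeasurableSpace (NonemptyCompacts (EuclideanSpace ℝ (Fin d)))]
    [BorelSpace (NonemptyCompacts (EuclideanSpace ℝ (Fin d)))]
    (μ : Ω → SignedMeasure (EuclideanSpace ℝ (Fin d)))
    (hmeas : ∀ B : Set (EuclideanSpace ℝ (Fin d)), MeasurableSet B →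
      Bornology.IsBounded B → Measurable fun ω => μ ω B) :
    Measurable fun p : Ω × NonemptyCompacts (EuclideanSpace ℝ (Fin d)) =>
      μ p.1 (p.2 : Set (EuclideanSpace ℝ (Fin d))) :=
  measurable_signedMeasure_apply_nonemptyCompacts μ hmeas
end

section
/- Let O ⊂ ℝ^d be a nonempty bounded open set and let {O_σ : σ ∈ S} be a finite family of pairwise disjoint open subsets of O, each of which is a similar copy of O with similarity ratio r_σ satisfying (r_min/R) r ≤ r_σ ≤ r/R for constants R > √2·|O| and r_min ∈ (0,1) and a given r > 0. Then there exists a constant Γ = κ_d 4^d R^d / (r_min^d 𝓛^d(O)) (independent of r) such that for every σ ∈ S, the number of σ' ∈ S with O_σ(r) ∩ O_{σ'}(r) ≠ ∅ is at most Γ. -/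
open Metric MeasureTheory
open scoped Classical ENNReal Pointwise

lemma volume_image_similarity' {d : ℕ}
    (g : EuclideanSpace ℝ (Fin d) → EuclideanSpace ℝ (Fin d))
    {c : ℝ} (hc : 0 < c) (hg : ∀ x y, dist (g x) (g y) = c * dist x y)
    (s : Set (EuclideanSpace ℝ (Fin d))) (hs : MeasurableSet s) :
    volume (g '' s) = ENNReal.ofReal (c ^ d) * volume s := by
  set h : EuclideanSpace ℝ (Fin d) → EuclideanSpace ℝ (Fin d) := fun x => c⁻¹ • g x with hh
  have hiso : Isometry h := Isometry.of_dist_eq (fun x y => by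
    have h1 : dist (h x) (h y) = |c⁻¹| * (c * dist x y) := by
      rw [hh]; simp [dist_smul₀, hg, Real.norm_eq_abs, abs_inv]
    rw [h1, abs_of_pos (inv_pos.2 hc), inv_mul_cancel_left₀ hc.ne'])
  set A := hiso.affineIsometryOfStrictConvexSpace
  set L := A.linearIsometry
  set Le := L.toLinearIsometryEquiv rfl
  have hAeq : ∀ x : EuclideanSpace ℝ (Fin d), h x = Le x + h 0 := by
    intro x
    have h1 : A (x +ᵥ (0 : EuclideanSpace ℝ (Fin d))) = L x +ᵥ A 0 := A.map_vadd 0 x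
    simpa [A, Le, L] using h1
  have hgx : ∀ x : EuclideanSpace ℝ (Fin d), g x = c • h 0 + c • (Le x) := by
    intro x
    have : g x = c • h x := by
      rw [hh]; simp [smul_smul, mul_inv_cancel₀ hc.ne']
    rw [this, hAeq x, smul_add, add_comm]
  have himg : g '' s = (fun y => c • h 0 + y) '' ((fun y => c • y) '' (⇑Le '' s)) := by
    rw [← Set.image_comp, ← Set.image_comp]
    exact Set.image_congr fun x _ => hgx x
  rw [himg]
  have h1 : volume ((fun y => c • h 0 + y) '' ((fun y => c • y) '' (⇑Le '' s)))
      = volume ((fun y => c • y) '' (⇑Le '' s)) := by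
    rw [Set.image_add_left, measure_preimage_add]
  rw [h1]
  have h2 : (fun y => c • y) '' (⇑Le '' s) = c • (⇑Le '' s) := rfl
  rw [h2, Measure.addHaar_smul]
  have h3 : volume (⇑Le '' s) = volume s := by
    rw [Set.image_eq_preimage_of_inverse Le.symm_apply_apply Le.apply_symm_apply]
    exact Le.symm.measurePreserving.measure_preimage hs.nullMeasurableSet
  rw [h3, finrank_euclideanSpace_fin, abs_of_pos (pow_pos hc d)]

theorem bounded_number_of_intersecting_parallel_neighbours {d : ℕ}
    (O : Set (EuclideanSpace ℝ (Fin d))) (hOne : O.Nonempty)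
    (hObd : Bornology.IsBounded O) (hOop : IsOpen O)
    {ι : Type*} (S : Finset ι)
    (Oσ : ι → Set (EuclideanSpace ℝ (Fin d))) (rσ : ι → ℝ)
    (f : ι → EuclideanSpace ℝ (Fin d) → EuclideanSpace ℝ (Fin d))
    (R rmin r : ℝ)
    (hR : Real.sqrt 2 * Metric.diam O < R)
    (hrmin : 0 < rmin) (hrmin1 : rmin < 1) (hr : 0 < r)
    (hopen : ∀ σ ∈ S, IsOpen (Oσ σ))
    (hsub : ∀ σ ∈ S, Oσ σ ⊆ O)
    (hdisj : ∀ σ ∈ S, ∀ σ' ∈ S, σ ≠ σ' → Disjoint (Oσ σ) (Oσ σ'))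
    (hsim : ∀ σ ∈ S, (∀ x y, dist (f σ x) (f σ y) = rσ σ * dist x y) ∧
      Oσ σ = f σ '' O)
    (hratio : ∀ σ ∈ S, rmin / R * r ≤ rσ σ ∧ rσ σ ≤ r / R) :
    ∀ σ ∈ S,
      ((S.filter fun σ' =>
          (cthickening r (Oσ σ) ∩ cthickening r (Oσ σ')).Nonempty).card : ℝ) ≤
        (volume (ball (0 : EuclideanSpace ℝ (Fin d)) 1)).toReal * 4 ^ d * R ^ d /
          (rmin ^ d * (volume O).toReal) := by
  intro σ hσ
  have hsqrt2 : (1 : ℝ) ≤ Real.sqrt 2 := by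
    rw [show (1:ℝ) = Real.sqrt 1 from (Real.sqrt_one).symm]
    exact Real.sqrt_le_sqrt (by norm_num)
  have hdiamO : 0 ≤ diam O := diam_nonneg
  have hR0 : 0 < R := lt_of_le_of_lt (mul_nonneg (Real.sqrt_nonneg 2) hdiamO) hR
  have hdR : diam O < R :=
    lt_of_le_of_lt (le_mul_of_one_le_left hdiamO hsqrt2) hR
  have hrpos : ∀ τ ∈ S, 0 < rσ τ := fun τ hτ =>
    lt_of_lt_of_le (by positivity) (hratio τ hτ).1
  -- diameter bound
  have hdiam : ∀ τ ∈ S, diam (Oσ τ) ≤ r := by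
    intro τ hτ
    have h1 : diam (Oσ τ) ≤ rσ τ * diam O := by
      rw [(hsim τ hτ).2]
      apply diam_le_of_forall_dist_le (mul_nonneg (hrpos τ hτ).le hdiamO)
      rintro _ ⟨x, hx, rfl⟩ _ ⟨y, hy, rfl⟩
      rw [(hsim τ hτ).1]
      exact mul_le_mul_of_nonneg_left (dist_le_diam_of_mem hObd hx hy) (hrpos τ hτ).le
    calc diam (Oσ τ) ≤ rσ τ * diam O := h1
      _ ≤ (r / R) * R := mul_le_mul (hratio τ hτ).2 hdR.le hdiamO (by positivity)
      _ = r := by field_simp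
  obtain ⟨x0, hx0⟩ : (Oσ σ).Nonempty := by
    rw [(hsim σ hσ).2]; exact hOne.image _
  set N := S.filter fun σ' =>
      (cthickening r (Oσ σ) ∩ cthickening r (Oσ σ')).Nonempty with hN
  -- each neighbour lies in a ball of radius 4r
  have hcontain : ∀ τ ∈ N, Oσ τ ⊆ closedBall x0 (4 * r) := by
    intro τ hτ
    rw [hN, Finset.mem_filter] at hτ
    obtain ⟨hτS, z, hz1, hz2⟩ := hτ
    intro y hy
    have hbd1 : Bornology.IsBounded (Oσ σ) := hObd.subset (hsub σ hσ)
    have hbd2 : Bornology.IsBounded (Oσ τ) := hObd.subset (hsub τ hτS)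
    have key : ∀ (A : Set (EuclideanSpace ℝ (Fin d))), z ∈ cthickening r A → infDist z A ≤ r := by
      intro A hzA
      have h := mem_cthickening_iff.1 hzA
      calc infDist z A = (EMetric.infEdist z A).toReal := rfl
        _ ≤ (ENNReal.ofReal r).toReal := ENNReal.toReal_mono ENNReal.ofReal_ne_top h
        _ = r := ENNReal.toReal_ofReal hr.le
    have d1 : dist z x0 ≤ 2 * r := by
      calc dist z x0 ≤ infDist z (Oσ σ) + diam (Oσ σ) := dist_le_infDist_add_diam hbd1 hx0
        _ ≤ r + r := add_le_add (key _ hz1) (hdiam σ hσ)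
        _ = 2 * r := by ring
    have d2 : dist z y ≤ 2 * r := by
      calc dist z y ≤ infDist z (Oσ τ) + diam (Oσ τ) := dist_le_infDist_add_diam hbd2 hy
        _ ≤ r + r := add_le_add (key _ hz2) (hdiam τ hτS)
        _ = 2 * r := by ring
    have : dist y x0 ≤ 4 * r := by
      calc dist y x0 ≤ dist y z + dist z x0 := dist_triangle y z x0
        _ ≤ 2 * r + 2 * r := add_le_add (by rw [dist_comm]; exact d2) d1
        _ = 4 * r := by ring
    exact mem_closedBall.2 this
  -- volume computation
  have hvol : ∀ τ ∈ S, volume (Oσ τ) = ENNReal.ofReal (rσ τ ^ d) * volume O := by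
    intro τ hτ
    rw [(hsim τ hτ).2]
    exact volume_image_similarity' _ (hrpos τ hτ) (hsim τ hτ).1 O hOop.measurableSet
  set a : ℝ := (rmin / R * r) ^ d with ha
  have ha0 : 0 < a := by positivity
  have hlow : ∀ τ ∈ N, ENNReal.ofReal a * volume O ≤ volume (Oσ τ) := by
    intro τ hτ
    have hτS : τ ∈ S := Finset.mem_of_mem_filter τ hτ
    rw [hvol τ hτS]
    refine mul_le_mul_left (ENNReal.ofReal_le_ofReal ?_) _
    exact pow_le_pow_left₀ (by positivity) (hratio τ hτS).1 d
  have hpd : Set.PairwiseDisjoint (↑N : Set ι) Oσ := by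
    intro τ1 h1 τ2 h2 hne
    show Disjoint (Oσ τ1) (Oσ τ2)
    exact hdisj τ1 (Finset.mem_of_mem_filter τ1 h1) τ2 (Finset.mem_of_mem_filter τ2 h2) hne
  have hsum : (N.card : ℝ≥0∞) * (ENNReal.ofReal a * volume O)
      ≤ ENNReal.ofReal ((4 * r) ^ d) * volume (ball (0 : EuclideanSpace ℝ (Fin d)) 1) := by
    calc (N.card : ℝ≥0∞) * (ENNReal.ofReal a * volume O)
        = N.card • (ENNReal.ofReal a * volume O) := by rw [nsmul_eq_mul]
      _ ≤ ∑ τ ∈ N, volume (Oσ τ) := Finset.card_nsmul_le_sum N _ _ hlow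
      _ = volume (⋃ τ ∈ N, Oσ τ) :=
          (measure_biUnion_finset hpd fun τ hτ =>
            (hopen τ (Finset.mem_of_mem_filter τ hτ)).measurableSet).symm
      _ ≤ volume (closedBall x0 (4 * r)) :=
          measure_mono (Set.iUnion₂_subset hcontain)
      _ = ENNReal.ofReal ((4 * r) ^ d) * volume (ball (0 : EuclideanSpace ℝ (Fin d)) 1) := by
          rw [Measure.addHaar_closedBall volume x0 (by positivity : (0:ℝ) ≤ 4 * r),
            finrank_euclideanSpace_fin]
  -- pass to real numbers
  set VO := (volume O).toReal with hVO
  set K := (volume (ball (0 : EuclideanSpace ℝ (Fin d)) 1)).toReal with hK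
  have hOfin : volume O ≠ ⊤ := hObd.measure_lt_top.ne
  have hKfin : volume (ball (0 : EuclideanSpace ℝ (Fin d)) 1) ≠ ⊤ := measure_ball_lt_top.ne
  have hVO0 : 0 < VO := ENNReal.toReal_pos (hOop.measure_pos volume hOne).ne' hOfin
  have hK0 : 0 < K :=
    ENNReal.toReal_pos (isOpen_ball.measure_pos volume (nonempty_ball.2 one_pos)).ne' hKfin
  have hreal : (N.card : ℝ) * (a * VO) ≤ (4 * r) ^ d * K := by
    have h := ENNReal.toReal_mono
      (by exact ENNReal.mul_ne_top ENNReal.ofReal_ne_top hKfin) hsum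
    rwa [ENNReal.toReal_mul, ENNReal.toReal_mul, ENNReal.toReal_mul, ENNReal.toReal_natCast,
      ENNReal.toReal_ofReal ha0.le,
      ENNReal.toReal_ofReal (show (0:ℝ) ≤ (4 * r) ^ d by positivity), ← hVO, ← hK] at h
  have heq : (4 * r) ^ d * K / (a * VO) = K * 4 ^ d * R ^ d / (rmin ^ d * VO) := by
    rw [ha, mul_pow, mul_pow, div_pow]
    field_simp
  calc (N.card : ℝ) ≤ (4 * r) ^ d * K / (a * VO) := by
        rw [le_div_iff₀ (by positivity)]; exact hreal
    _ = K * 4 ^ d * R ^ d / (rmin ^ d * VO) := heq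
end

section
/- Let K ⊂ ℝ^d be compact and let V(r) := 𝓛^d(K(r)) be the volume of the r-parallel set. Then V is a Kneser function of order d on (0,∞): for all 0 < a ≤ b and λ ≥ 1, V(λb) − V(λa) ≤ λ^d (V(b) − V(a)). In particular V is continuous on (0,∞). -/
open Metric EMetric MeasureTheory
open scoped ENNReal NNReal InnerProductSpace

/-- A `c`-Lipschitz map on a subset of `ℝ^d` increases volume by at most `c^d`. -/
lemma aux_lipschitz_image_volume_le {d : ℕ}
    {f : EuclideanSpace ℝ (Fin d) → EuclideanSpace ℝ (Fin d)}
    {s : Set (EuclideanSpace ℝ (Fin d))} {c : ℝ≥0} (hf : LipschitzOnWith c f s) :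
    volume (f '' s) ≤ (c : ℝ≥0∞) ^ d * volume s := by
  have hfin : Measure.IsAddHaarMeasure (μH[(d : ℝ)] : Measure (EuclideanSpace ℝ (Fin d))) := by
    have hd : ((d : ℝ)) = ((Module.finrank ℝ (EuclideanSpace ℝ (Fin d)) : ℕ) : ℝ) := by
      simp [finrank_euclideanSpace_fin]
    rw [hd]
    infer_instance
  set c₀ : ℝ≥0 := Measure.addHaarScalarFactor (μH[(d : ℝ)] : Measure (EuclideanSpace ℝ (Fin d)))
    volume with hc₀
  have h : (μH[(d : ℝ)] : Measure (EuclideanSpace ℝ (Fin d))) = (c₀ : ℝ≥0∞) • volume :=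
    Measure.isAddLeftInvariant_eq_smul _ _
  have hc₀pos : 0 < c₀ := Measure.addHaarScalarFactor_pos_of_isAddHaarMeasure _ _
  have hμ : μH[(d : ℝ)] (f '' s) ≤ (c : ℝ≥0∞) ^ (d : ℝ) * μH[(d : ℝ)] s :=
    hf.hausdorffMeasure_image_le (by positivity)
  rw [h] at hμ
  simp only [Measure.smul_apply, smul_eq_mul] at hμ
  rw [ENNReal.rpow_natCast] at hμ
  have hc₀ne : (c₀ : ℝ≥0∞) ≠ 0 := by
    simpa using hc₀pos.ne'
  have hc₀top : (c₀ : ℝ≥0∞) ≠ ⊤ := ENNReal.coe_ne_top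
  rw [show (c : ℝ≥0∞) ^ d * ((c₀ : ℝ≥0∞) * volume s)
      = (c₀ : ℝ≥0∞) * ((c : ℝ≥0∞) ^ d * volume s) by ring] at hμ
  exact (ENNReal.mul_le_mul_iff_right hc₀ne hc₀top).1 hμ

/-- The core Kneser-type inequality for volumes of differences of parallel sets,
in `ℝ≥0∞` form, allowing `a = 0`. -/
lemma aux_kneser_ennreal {d : ℕ} (K : Set (EuclideanSpace ℝ (Fin d)))
    (hne : K.Nonempty) (hK : IsCompact K) {lam a b : ℝ}
    (hlam : 1 ≤ lam) (ha : 0 ≤ a) (hab : a ≤ b) :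
    volume (cthickening (lam * b) K \ cthickening (lam * a) K) ≤
      ENNReal.ofReal (lam ^ d) * volume (cthickening b K \ cthickening a K) := by
  classical
  have hlam0 : (0 : ℝ) < lam := lt_of_lt_of_le one_pos hlam
  have hb : (0 : ℝ) ≤ b := ha.trans hab
  choose p hpK hpd using fun x => hK.exists_infDist_eq_dist hne x
  set φ : EuclideanSpace ℝ (Fin d) → EuclideanSpace ℝ (Fin d) :=
    fun x => p x + lam⁻¹ • (x - p x) with hφ
  set B := cthickening (lam * b) K \ cthickening (lam * a) K with hB
  set A := cthickening b K \ cthickening a K with hA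
  -- membership characterization
  have mem_iff : ∀ (δ : ℝ), 0 ≤ δ → ∀ x, x ∈ cthickening δ K ↔ infDist x K ≤ δ := by
    intro δ hδ x
    rw [mem_cthickening_iff]
    rw [show infDist x K = (infEdist x K).toReal from rfl]
    exact ENNReal.le_ofReal_iff_toReal_le (infEdist_ne_top hne) hδ
  -- monotonicity of the nearest point map
  have hmono : ∀ x y, 0 ≤ ⟪x - y, p x - p y⟫_ℝ := by
    intro x y
    have h1 : dist x (p x) ≤ dist x (p y) := (hpd x) ▸ infDist_le_dist_of_mem (hpK y)
    have h2 : dist y (p y) ≤ dist y (p x) := (hpd y) ▸ infDist_le_dist_of_mem (hpK x)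
    rw [dist_eq_norm] at h1 h2
    have h1' : ‖x - p x‖ ^ 2 ≤ ‖x - p y‖ ^ 2 :=
      pow_le_pow_left₀ (norm_nonneg _) h1 2
    have h2' : ‖y - p y‖ ^ 2 ≤ ‖y - p x‖ ^ 2 :=
      pow_le_pow_left₀ (norm_nonneg _) h2 2
    have e1 : ‖x - p y‖ ^ 2
        = ‖x - p x‖ ^ 2 + 2 * ⟪x - p x, p x - p y⟫_ℝ + ‖p x - p y‖ ^ 2 := by
      rw [show x - p y = (x - p x) + (p x - p y) by abel, norm_add_sq_real]
    have e2 : ‖y - p x‖ ^ 2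
        = ‖y - p y‖ ^ 2 + 2 * ⟪y - p y, p y - p x⟫_ℝ + ‖p y - p x‖ ^ 2 := by
      rw [show y - p x = (y - p y) + (p y - p x) by abel, norm_add_sq_real]
    have e3 : ⟪x - y, p x - p y⟫_ℝ
        = ⟪x - p x, p x - p y⟫_ℝ - ⟪y - p y, p x - p y⟫_ℝ + ‖p x - p y‖ ^ 2 := by
      rw [show x - y = (x - p x) - (y - p y) + (p x - p y) by abel, inner_add_left,
        inner_sub_left, real_inner_self_eq_norm_sq]
    have e4 : ⟪y - p y, p y - p x⟫_ℝ = -⟪y - p y, p x - p y⟫_ℝ := by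
      rw [show p y - p x = -(p x - p y) by abel, inner_neg_right]
    have e5 : ‖p y - p x‖ = ‖p x - p y‖ := norm_sub_rev _ _
    rw [e1] at h1'
    rw [e2, e4, e5] at h2'
    rw [e3]
    nlinarith [sq_nonneg (‖p x - p y‖)]
  -- expansion estimate
  have hexp : ∀ x y, ‖x - y‖ ≤ lam * ‖φ x - φ y‖ := by
    intro x y
    have hiden : lam • (φ x - φ y) = (x - y) + (lam - 1) • (p x - p y) := by
      simp only [hφ]
      match_scalars <;> (field_simp; try ring)
    have key : ‖x - y‖ ^ 2 ≤ (lam * ‖φ x - φ y‖) ^ 2 := by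
      have h1 : ‖(x - y) + (lam - 1) • (p x - p y)‖ ^ 2
          = ‖x - y‖ ^ 2 + 2 * ((lam - 1) * ⟪x - y, p x - p y⟫_ℝ)
            + (lam - 1) ^ 2 * ‖p x - p y‖ ^ 2 := by
        rw [norm_add_sq_real, real_inner_smul_right, norm_smul]
        simp [mul_pow, sq_abs]
        try ring
      have h2 : (lam * ‖φ x - φ y‖) ^ 2 = ‖(x - y) + (lam - 1) • (p x - p y)‖ ^ 2 := by
        rw [← hiden, norm_smul]
        simp [abs_of_pos hlam0, mul_pow]
      rw [h2, h1]
      have hm := hmono x y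
      nlinarith [sq_nonneg (lam - 1), sq_nonneg (‖p x - p y‖), mul_nonneg (sub_nonneg.2 hlam)
        (hmono x y)]
    nlinarith [norm_nonneg (x - y), mul_nonneg hlam0.le (norm_nonneg (φ x - φ y)), key]
  have hinj : Function.Injective φ := by
    intro x y hxy
    have h := hexp x y
    rw [hxy, sub_self, norm_zero, mul_zero] at h
    have hz : x - y = 0 := by
      simpa [norm_eq_zero] using h.antisymm (norm_nonneg _)
    exact sub_eq_zero.1 hz
  -- distance of a point to its image under φ
  have hdistp : ∀ x, dist (φ x) (p x) = lam⁻¹ * infDist x K := by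
    intro x
    have : φ x - p x = lam⁻¹ • (x - p x) := by simp [hφ]
    rw [dist_eq_norm, this, norm_smul, Real.norm_eq_abs, abs_of_pos (inv_pos.2 hlam0), hpd x, dist_eq_norm]
  have hdistx : ∀ x, dist x (φ x) = (1 - lam⁻¹) * infDist x K := by
    intro x
    have h1 : x - φ x = (1 - lam⁻¹) • (x - p x) := by
      simp only [hφ]
      match_scalars <;> ring
    have hl : (0:ℝ) ≤ 1 - lam⁻¹ := by
      have : lam⁻¹ ≤ 1 := by
        rw [inv_le_one_iff₀]; right; exact hlam
      linarith
    rw [dist_eq_norm, h1, norm_smul, Real.norm_eq_abs, abs_of_nonneg hl, hpd x, dist_eq_norm]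
  -- φ maps B into A
  have hmaps : ∀ x ∈ B, φ x ∈ A := by
    rintro x ⟨hxb, hxa⟩
    have hxb' : infDist x K ≤ lam * b :=
      (mem_iff _ (mul_nonneg hlam0.le hb) x).1 hxb
    have hxa' : lam * a < infDist x K :=
      lt_of_not_ge fun h => hxa ((mem_iff _ (mul_nonneg hlam0.le ha) x).2 h)
    have hlow : a < lam⁻¹ * infDist x K := by
      rw [lt_inv_mul_iff₀ hlam0]
      linarith [hxa']
    constructor
    · refine (mem_iff b hb _).2 ?_
      calc infDist (φ x) K ≤ dist (φ x) (p x) := infDist_le_dist_of_mem (hpK x)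
        _ = lam⁻¹ * infDist x K := hdistp x
        _ ≤ lam⁻¹ * (lam * b) := by
            have := inv_nonneg.2 hlam0.le
            exact mul_le_mul_of_nonneg_left hxb' this
        _ = b := by field_simp
    · intro hmem
      have hle : infDist (φ x) K ≤ a := (mem_iff a ha _).1 hmem
      have hlt : infDist (φ x) K < lam⁻¹ * infDist x K := lt_of_le_of_lt hle hlow
      obtain ⟨q, hq, hqd⟩ := (infDist_lt_iff hne).1 hlt
      have h1 : infDist x K ≤ dist x q := infDist_le_dist_of_mem hq
      have h2 := hdistx x
      have h3 := dist_triangle x (φ x) q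
      linarith
  -- the inverse map is `lam`-Lipschitz on `φ '' B`
  set g := Function.invFunOn φ B with hg
  have hinjOn : Set.InjOn φ B := fun x _ y _ h => hinj h
  have hgl : Set.LeftInvOn g φ B := hinjOn.leftInvOn_invFunOn
  have hlip : LipschitzOnWith lam.toNNReal g (φ '' B) := by
    apply LipschitzOnWith.of_dist_le_mul
    rintro z ⟨x, hx, rfl⟩ w ⟨y, hy, rfl⟩
    rw [hgl hx, hgl hy, dist_eq_norm, dist_eq_norm]
    rw [Real.coe_toNNReal _ hlam0.le]
    exact hexp x y
  have hBsub : B ⊆ g '' (φ '' B) := fun x hx =>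
    ⟨φ x, Set.mem_image_of_mem _ hx, hgl hx⟩
  have hφBA : φ '' B ⊆ A := Set.image_subset_iff.2 fun x hx => hmaps x hx
  calc volume B ≤ volume (g '' (φ '' B)) := measure_mono hBsub
    _ ≤ ((lam.toNNReal : ℝ≥0∞)) ^ d * volume (φ '' B) := aux_lipschitz_image_volume_le hlip
    _ ≤ ENNReal.ofReal (lam ^ d) * volume A := by
        rw [ENNReal.ofReal_pow hlam0.le]
        exact mul_le_mul' le_rfl (measure_mono hφBA)

/-- Scaling bound: `V(s) ≤ (s/r)^d V(r)` for `0 < r ≤ s`. -/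
lemma aux_scale {d : ℕ} (K : Set (EuclideanSpace ℝ (Fin d)))
    (hne : K.Nonempty) (hK : IsCompact K) {r s : ℝ} (hr : 0 < r) (hrs : r ≤ s) :
    (volume (cthickening s K)).toReal ≤ (s / r) ^ d * (volume (cthickening r K)).toReal := by
  have hfin : ∀ t : ℝ, volume (cthickening t K) ≠ ⊤ := fun t =>
    (hK.cthickening).measure_lt_top.ne
  have hcfin : volume (closure K) ≠ ⊤ :=
    ((measure_mono (closure_subset_cthickening 0 K)).trans_lt (hK.cthickening).measure_lt_top).ne
  have hlam : 1 ≤ s / r := (one_le_div hr).2 hrs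
  have key := aux_kneser_ennreal K hne hK hlam le_rfl hr.le
  rw [mul_zero, div_mul_cancel₀ _ hr.ne', cthickening_zero] at key
  have hd1 : volume (cthickening s K \ closure K)
      = volume (cthickening s K) - volume (closure K) :=
    measure_diff (closure_subset_cthickening s K)
      isClosed_closure.measurableSet.nullMeasurableSet hcfin
  have hd2 : volume (cthickening r K \ closure K)
      = volume (cthickening r K) - volume (closure K) :=
    measure_diff (closure_subset_cthickening r K)
      isClosed_closure.measurableSet.nullMeasurableSet hcfin
  rw [hd1, hd2] at key
  have hreal := ENNReal.toReal_le_toReal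
    (ENNReal.sub_ne_top (hfin s))
    (ENNReal.mul_ne_top ENNReal.ofReal_ne_top (ENNReal.sub_ne_top (hfin r))) |>.2 key
  rw [ENNReal.toReal_mul, ENNReal.toReal_ofReal (by positivity),
    ENNReal.toReal_sub_of_le (measure_mono (closure_subset_cthickening s K)) (hfin s),
    ENNReal.toReal_sub_of_le (measure_mono (closure_subset_cthickening r K)) (hfin r)] at hreal
  have hvc : (0:ℝ) ≤ (volume (closure K)).toReal := ENNReal.toReal_nonneg
  have hpow : (1:ℝ) ≤ (s / r) ^ d := one_le_pow₀ hlam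
  nlinarith [hreal, hvc, hpow]

theorem parallel_volume_kneser {d : ℕ}
    (K : Set (EuclideanSpace ℝ (Fin d))) (hne : K.Nonempty) (hK : IsCompact K) :
    (∀ a b lam : ℝ, 0 < a → a ≤ b → 1 ≤ lam →
      (volume (cthickening (lam * b) K)).toReal -
          (volume (cthickening (lam * a) K)).toReal ≤
        lam ^ d *
          ((volume (cthickening b K)).toReal -
            (volume (cthickening a K)).toReal)) ∧
      ContinuousOn (fun r : ℝ => (volume (cthickening r K)).toReal)
        (Set.Ioi 0) := by
  have hfin : ∀ t : ℝ, volume (cthickening t K) ≠ ⊤ := fun t =>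
    (hK.cthickening).measure_lt_top.ne
  set f : ℝ → ℝ := fun r => (volume (cthickening r K)).toReal with hf
  have hfmono : ∀ r s : ℝ, r ≤ s → f r ≤ f s := fun r s h =>
    (ENNReal.toReal_le_toReal (hfin r) (hfin s)).2 (measure_mono (cthickening_mono h K))
  have hfnn : ∀ r : ℝ, 0 ≤ f r := fun r => ENNReal.toReal_nonneg
  constructor
  · intro a b lam ha0 hab hlam
    have hlam0 : (0:ℝ) < lam := lt_of_lt_of_le one_pos hlam
    have key := aux_kneser_ennreal K hne hK hlam ha0.le hab
    have hlab : lam * a ≤ lam * b := mul_le_mul_of_nonneg_left hab hlam0.le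
    have hd1 : volume (cthickening (lam * b) K \ cthickening (lam * a) K)
        = volume (cthickening (lam * b) K) - volume (cthickening (lam * a) K) :=
      measure_diff (cthickening_mono hlab K)
        isClosed_cthickening.measurableSet.nullMeasurableSet (hfin _)
    have hd2 : volume (cthickening b K \ cthickening a K)
        = volume (cthickening b K) - volume (cthickening a K) :=
      measure_diff (cthickening_mono hab K)
        isClosed_cthickening.measurableSet.nullMeasurableSet (hfin _)
    rw [hd1, hd2] at key
    have hreal := ENNReal.toReal_le_toReal
      (ENNReal.sub_ne_top (hfin _))
      (ENNReal.mul_ne_top ENNReal.ofReal_ne_top (ENNReal.sub_ne_top (hfin _))) |>.2 key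
    rw [ENNReal.toReal_mul, ENNReal.toReal_ofReal (by positivity),
      ENNReal.toReal_sub_of_le (measure_mono (cthickening_mono hlab K)) (hfin _),
      ENNReal.toReal_sub_of_le (measure_mono (cthickening_mono hab K)) (hfin _)] at hreal
    exact hreal
  · intro r hr
    rw [Set.mem_Ioi] at hr
    have hL : ∀ s ∈ Set.Ioi (0:ℝ), min 1 ((s / r) ^ d) * f r ≤ f s := by
      intro s hs
      rw [Set.mem_Ioi] at hs
      rcases le_or_gt s r with h | h
      · have h1 : f r ≤ (r / s) ^ d * f s := aux_scale K hne hK hs h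
        have h2 : (0:ℝ) ≤ (s / r) ^ d := by positivity
        have h3 : (s / r) ^ d * ((r / s) ^ d) = 1 := by
          rw [← mul_pow]
          rw [show s / r * (r / s) = 1 by field_simp]
          simp
        calc min 1 ((s / r) ^ d) * f r ≤ (s / r) ^ d * f r :=
              mul_le_mul_of_nonneg_right (min_le_right _ _) (hfnn r)
          _ ≤ (s / r) ^ d * ((r / s) ^ d * f s) := mul_le_mul_of_nonneg_left h1 h2
          _ = f s := by rw [← mul_assoc, h3, one_mul]
      · calc min 1 ((s / r) ^ d) * f r ≤ 1 * f r :=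
              mul_le_mul_of_nonneg_right (min_le_left _ _) (hfnn r)
          _ = f r := one_mul _
          _ ≤ f s := hfmono _ _ h.le
    have hU : ∀ s ∈ Set.Ioi (0:ℝ), f s ≤ max 1 ((s / r) ^ d) * f r := by
      intro s hs
      rw [Set.mem_Ioi] at hs
      rcases le_or_gt r s with h | h
      · calc f s ≤ (s / r) ^ d * f r := aux_scale K hne hK hr h
          _ ≤ max 1 ((s / r) ^ d) * f r :=
              mul_le_mul_of_nonneg_right (le_max_right _ _) (hfnn r)
      · calc f s ≤ f r := hfmono _ _ h.le
          _ = 1 * f r := (one_mul _).symm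
          _ ≤ max 1 ((s / r) ^ d) * f r :=
              mul_le_mul_of_nonneg_right (le_max_left _ _) (hfnn r)
    have hLc : Continuous fun s : ℝ => min 1 ((s / r) ^ d) * f r := by
      apply Continuous.mul _ continuous_const
      exact (continuous_const.min ((continuous_id.div_const r).pow d))
    have hUc : Continuous fun s : ℝ => max 1 ((s / r) ^ d) * f r := by
      apply Continuous.mul _ continuous_const
      exact (continuous_const.max ((continuous_id.div_const r).pow d))
    have hval : (r / r) ^ d = (1:ℝ) := by rw [div_self hr.ne']; simp
    have hLt : Filter.Tendsto (fun s : ℝ => min 1 ((s / r) ^ d) * f r)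
        (nhdsWithin r (Set.Ioi 0)) (nhds (f r)) := by
      have h' := (hLc.tendsto r).mono_left (nhdsWithin_le_nhds (s := Set.Ioi 0))
      simpa [hval] using h'
    have hUt : Filter.Tendsto (fun s : ℝ => max 1 ((s / r) ^ d) * f r)
        (nhdsWithin r (Set.Ioi 0)) (nhds (f r)) := by
      have h' := (hUc.tendsto r).mono_left (nhdsWithin_le_nhds (s := Set.Ioi 0))
      simpa [hval] using h'
    have hLev : ∀ᶠ s in nhdsWithin r (Set.Ioi 0), min 1 ((s / r) ^ d) * f r ≤ f s :=
      Filter.eventually_iff_exists_mem.2 ⟨Set.Ioi 0, self_mem_nhdsWithin, hL⟩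
    have hUev : ∀ᶠ s in nhdsWithin r (Set.Ioi 0), f s ≤ max 1 ((s / r) ^ d) * f r :=
      Filter.eventually_iff_exists_mem.2 ⟨Set.Ioi 0, self_mem_nhdsWithin, hU⟩
    exact tendsto_of_tendsto_of_tendsto_of_le_of_le' hLt hUt hLev hUev
end

section
/- Let K ⊂ ℝ^d be compact and assume the volume function r ↦ 𝓛^d(K(r)) is differentiable at r > 0 with derivative V'(r). Then V'(r) ≤ (d/r)·𝓛^d(K(r)). -/
/-!
Moving each point `x` towards a nearest point `p x` of `K` by the factor `c = r / s` maps
`K(s)` into `K(r)`. Nearest-point selections are monotone, `0 ≤ ⟪x - x', p x - p x'⟫`, so this map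
expands distances by at least `c`; its inverse is `c⁻¹`-Lipschitz on the image, whence
`𝓛(K(s)) ≤ (s / r)^d 𝓛(K(r))` for `r ≤ s` (Kneser). The right-hand side agrees with `𝓛(K(s))` at
`s = r` and has derivative `(d / r) 𝓛(K(r))` there, which bounds the right derivative of the volume.
-/

open Metric MeasureTheory InnerProductSpace Set Topology Module Function
open scoped NNReal

section InnerProduct

variable {E : Type*} [NormedAddCommGroup E] [InnerProductSpace ℝ E]

theorem real_inner_sub_sub_nonneg_of_norm_sub_le {x x' y y' : E} (h : ‖x - y‖ ≤ ‖x - y'‖)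
    (h' : ‖x' - y'‖ ≤ ‖x' - y‖) : 0 ≤ ⟪x - x', y - y'⟫_ℝ := by
  have e := pow_le_pow_left₀ (norm_nonneg _) h 2
  have e' := pow_le_pow_left₀ (norm_nonneg _) h' 2
  simp only [norm_sub_sq_real, inner_sub_left, inner_sub_right] at e e' ⊢
  linarith

theorem mul_norm_sub_le_norm_sub_of_real_inner_nonneg {x x' y y' : E} {c : ℝ} (hc₀ : 0 ≤ c)
    (hc₁ : c ≤ 1) (h : 0 ≤ ⟪x - x', y - y'⟫_ℝ) :
    c * ‖x - x'‖ ≤ ‖(y + c • (x - y)) - (y' + c • (x' - y'))‖ := by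
  have hsplit : (y + c • (x - y)) - (y' + c • (x' - y')) = (1 - c) • (y - y') + c • (x - x') := by
    module
  rw [hsplit, ← pow_le_pow_iff_left₀ (by positivity) (norm_nonneg _) two_ne_zero]
  rw [norm_add_sq_real, real_inner_smul_left, real_inner_smul_right, norm_smul, norm_smul,
    real_inner_comm, Real.norm_of_nonneg hc₀, Real.norm_of_nonneg (sub_nonneg.2 hc₁)]
  nlinarith [mul_nonneg (mul_nonneg (sub_nonneg.2 hc₁) hc₀) h]

theorem mul_dist_le_dist_shrink_toward_nearest {K : Set E} {p : E → E} (hp : ∀ x, p x ∈ K)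
    (hnear : ∀ x, ∀ y ∈ K, dist x (p x) ≤ dist x y) {c : ℝ} (hc₀ : 0 ≤ c) (hc₁ : c ≤ 1)
    (x x' : E) : c * dist x x' ≤ dist (p x + c • (x - p x)) (p x' + c • (x' - p x')) := by
  simp only [dist_eq_norm] at hnear ⊢
  exact mul_norm_sub_le_norm_sub_of_real_inner_nonneg hc₀ hc₁ <|
    real_inner_sub_sub_nonneg_of_norm_sub_le (hnear x _ (hp x')) (hnear x' _ (hp x))

end InnerProduct

section AddHaar

variable {E : Type*} [NormedAddCommGroup E] [NormedSpace ℝ E] [FiniteDimensional ℝ E]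
  [MeasurableSpace E] [BorelSpace E] (μ : Measure E) [μ.IsAddHaarMeasure]

theorem LipschitzOnWith.addHaar_image_le {f : E → E} {K : ℝ≥0} {s : Set E}
    (hf : LipschitzOnWith K f s) : μ (f '' s) ≤ K ^ finrank ℝ E * μ s := by
  have hμ : μ = μ.addHaarScalarFactor μH[finrank ℝ E] • μH[finrank ℝ E] :=
    μ.isAddLeftInvariant_eq_smul _
  rw [hμ, Measure.smul_apply, Measure.smul_apply, ENNReal.smul_def, ENNReal.smul_def, smul_eq_mul,
    smul_eq_mul, mul_left_comm, ← ENNReal.rpow_natCast]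
  gcongr
  exact hf.hausdorffMeasure_image_le (Nat.cast_nonneg _)

theorem AntilipschitzWith.addHaar_le_image {f : E → E} {K : ℝ≥0} (hf : AntilipschitzWith K f)
    (s : Set E) : μ s ≤ K ^ finrank ℝ E * μ (f '' s) := by
  have hsurj : SurjOn f s (f '' s) := surjOn_image f s
  have hinv : LipschitzOnWith K (invFunOn f s) (f '' s) := lipschitzOnWith_iff_restrict.2 <|
    hf.to_rightInvOn hsurj.rightInvOn_invFunOn
  calc μ s ≤ μ (invFunOn f s '' (f '' s)) :=
        measure_mono (hf.injective.injOn.leftInvOn_invFunOn.image_image ▸ subset_rfl)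
    _ ≤ K ^ finrank ℝ E * μ (f '' s) := hinv.addHaar_image_le μ

end AddHaar

theorem addHaar_cthickening_le {E : Type*} [NormedAddCommGroup E] [InnerProductSpace ℝ E]
    [FiniteDimensional ℝ E] [MeasurableSpace E] [BorelSpace E] (μ : Measure E)
    [μ.IsAddHaarMeasure] {K : Set E} (hK : IsClosed K) {r s : ℝ} (hr : 0 < r) (hrs : r ≤ s) :
    μ (cthickening s K) ≤ ENNReal.ofReal ((s / r) ^ finrank ℝ E) * μ (cthickening r K) := by
  rcases K.eq_empty_or_nonempty with rfl | hne
  · simp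
  have hs : 0 < s := hr.trans_le hrs
  choose p hp hpK using hK.exists_infDist_eq_dist hne
  have hnear : ∀ x, ∀ y ∈ K, dist x (p x) ≤ dist x y := fun x y hy =>
    hpK x ▸ infDist_le_dist_of_mem hy
  set c := r / s
  have hc₀ : 0 ≤ c := div_nonneg hr.le hs.le
  set shrink : E → E := fun x => p x + c • (x - p x)
  have hshrink : AntilipschitzWith (s / r).toNNReal shrink := by
    refine antilipschitzWith_iff_le_mul_dist.2 fun x x' => ?_
    rw [Real.coe_toNNReal _ (by positivity), ← inv_div, le_inv_mul_iff₀ (by positivity)]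
    exact mul_dist_le_dist_shrink_toward_nearest hp hnear hc₀ (div_le_one_of_le₀ hrs hs.le) x x'
  have hmaps : MapsTo shrink (cthickening s K) (cthickening r K) := by
    intro x hx
    refine mem_cthickening_of_dist_le _ (p x) r K (hp x) ?_
    have hx' : dist x (p x) ≤ s :=
      hpK x ▸ ENNReal.toReal_le_of_le_ofReal hs.le (mem_cthickening_iff.1 hx)
    calc dist (shrink x) (p x) = c * dist x (p x) := by
          simp [shrink, dist_eq_norm, norm_smul, abs_of_nonneg hc₀]
      _ ≤ c * s := by gcongr
      _ = r := div_mul_cancel₀ r hs.ne'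
  calc μ (cthickening s K) ≤ (s / r).toNNReal ^ finrank ℝ E * μ (shrink '' cthickening s K) :=
        hshrink.addHaar_le_image μ _
    _ ≤ ENNReal.ofReal ((s / r) ^ finrank ℝ E) * μ (cthickening r K) := by
        rw [ENNReal.ofReal_pow (by positivity)]
        exact mul_le_mul_right (measure_mono hmaps.image_subset) _

theorem HasDerivAt.le_of_eventually_le_nhdsGT {f g : ℝ → ℝ} {f' g' x : ℝ}
    (hf : HasDerivAt f f' x) (hg : HasDerivAt g g' x) (hfg : ∀ᶠ y in 𝓝[>] x, f y ≤ g y)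
    (hx : f x = g x) : f' ≤ g' := by
  refine le_of_tendsto_of_tendsto (hf.tendsto_slope.mono_left (nhdsGT_le_nhdsNE x))
    (hg.tendsto_slope.mono_left (nhdsGT_le_nhdsNE x)) ?_
  filter_upwards [hfg, self_mem_nhdsWithin] with y hy hxy
  rw [slope_def_field, slope_def_field, hx]
  exact div_le_div_of_nonneg_right (by linarith) (sub_pos.2 hxy).le

theorem parallel_volume_deriv_le_general {d : ℕ}
    (K : Set (EuclideanSpace ℝ (Fin d))) (hK : IsCompact K)
    (r V' : ℝ) (hr : 0 < r)
    (hderiv : HasDerivAt (fun s : ℝ => (volume (cthickening s K)).toReal) V' r) :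
    V' ≤ (d / r) * (volume (cthickening r K)).toReal := by
  set V := (volume (cthickening r K)).toReal
  have hkneser : ∀ s, r ≤ s → (volume (cthickening s K)).toReal ≤ (s / r) ^ d * V := by
    intro s hrs
    have h := addHaar_cthickening_le volume hK.isClosed hr hrs
    rw [finrank_euclideanSpace_fin] at h
    have hfin : volume (cthickening r K) ≠ ⊤ := hK.cthickening.measure_lt_top.ne
    calc (volume (cthickening s K)).toReal
        ≤ (ENNReal.ofReal ((s / r) ^ d) * volume (cthickening r K)).toReal :=
          ENNReal.toReal_mono (ENNReal.mul_ne_top ENNReal.ofReal_ne_top hfin) h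
      _ = (s / r) ^ d * V := by
          rw [ENNReal.toReal_mul, ENNReal.toReal_ofReal (by have := hr.trans_le hrs; positivity)]
  have hbound : HasDerivAt (fun s => (s / r) ^ d * V) ((d / r) * V) r :=
    ((((hasDerivAt_id r).div_const r).pow d).mul_const V).congr_deriv <| by
      rw [id_eq, div_self hr.ne', one_pow]
      ring
  exact hderiv.le_of_eventually_le_nhdsGT hbound
    (eventually_nhdsWithin_of_forall fun s hs => hkneser s hs.le)
    (by simp [V, div_self hr.ne'])

theorem parallel_volume_deriv_le {d : ℕ}
    (K : Set (EuclideanSpace ℝ (Fin d))) (hne : K.Nonempty) (hK : IsCompact K)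
    (r V' : ℝ) (hr : 0 < r)
    (hderiv : HasDerivAt (fun s : ℝ => (volume (cthickening s K)).toReal) V' r) :
    V' ≤ (d / r) * (volume (cthickening r K)).toReal :=
  parallel_volume_deriv_le_general K hK r V' hr hderiv
end
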